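/- For all n ≥ 0, the Hankel determinant D_{3,-1}(n) = det(C_{3,i+j-1})_{i,j=0}^{n-1} satisfies: D_{3,-1}(3n) = (−1)^n, D_{3,-1}(3n+2) = (−1)^{n+1}, and D_{3,-1}(3n+1) = 0. -/

import Mathlib

/-!
The Hankel matrix `(C_{3,i+j-1})` factors as `L * H` with `L_{i,t} = binom(2i, i-t) - binom(2i, i-t-1)`
lower unitriangular (ballot numbers) and `H_{t,j} = binom(2j, j+t-1) - binom(2j, j+t+2)` upper
Hessenberg with ones on the subdiagonal. After the substitution `u = i - t` the entry of `L * H` is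
half of a full convolution of two antisymmetric differences of binomials, which Vandermonde's
identity evaluates to `binom(2N, N-1) - binom(2N, N-2) = C_{3,N-1}`, `N = i + j`.

The vector `v = (1, 0, -1, 1, 0, -1, …)` annihilates every column of the `N × N` matrix `H` except
the last, where it gives `-v_N`. Replacing the first row of `H` by `v H` (which keeps the determinant,
as `v_0 = 1`) and expanding along it leaves an upper unitriangular minor, so
`det H = (-1)^N v_N`.
-/

/-- The `k`-th convolution power of the Catalan numbers,
`C_{k,n} = (k/(2n+k)) * binom(2n+k, n)` for `n ≥ 0`, and `C_{k,n} = 0` for `n < 0`. -/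
noncomputable def catalanConv (k : ℕ) (n : ℤ) : ℚ :=
  if 0 ≤ n then (k : ℚ) / (2 * (n : ℚ) + k) * ((2 * n.toNat + k).choose n.toNat) else 0

/-- The Hankel determinant `D_{k,m}(N) = det (C_{k,i+j+m})_{i,j=0}^{N-1}`, `D_{k,m}(0) = 1`. -/
noncomputable def hankelDet (k : ℕ) (m : ℤ) (N : ℕ) : ℚ :=
  Matrix.det (Matrix.of fun i j : Fin N => catalanConv k ((i : ℤ) + (j : ℤ) + m))

open Finset

def intChoose (n : ℕ) (k : ℤ) : ℚ := if 0 ≤ k then (n.choose k.toNat : ℚ) else 0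

namespace intChoose

@[simp] lemma natCast (n u : ℕ) : intChoose n u = n.choose u := by
  simp [intChoose]

lemma of_neg {n : ℕ} {k : ℤ} (h : k < 0) : intChoose n k = 0 := by
  simp [intChoose, not_le.mpr h]

lemma of_lt {n : ℕ} {k : ℤ} (h : (n : ℤ) < k) : intChoose n k = 0 := by
  lift k to ℕ using by omega
  simp [Nat.choose_eq_zero_of_lt (by omega : n < k)]

lemma symm (n : ℕ) (k : ℤ) : intChoose n (n - k) = intChoose n k := by
  rcases lt_or_ge k 0 with hk | hk
  · rw [of_neg hk, of_lt (by omega)]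
  rcases lt_or_ge (n : ℤ) k with hn | hn
  · rw [of_neg (by omega), of_lt hn]
  lift k to ℕ using hk
  rw [show (n : ℤ) - k = ((n - k : ℕ) : ℤ) by omega, natCast, natCast,
    Nat.choose_symm (by omega)]

lemma add_one (n : ℕ) (k : ℤ) : intChoose (n + 1) k = intChoose n k + intChoose n (k - 1) := by
  rcases lt_or_ge k 1 with hk | hk
  · rcases lt_or_ge k 0 with hk' | hk'
    · simp [of_neg hk', of_neg (by omega : k - 1 < 0)]
    · obtain rfl : k = 0 := by omega
      simp [intChoose]
  lift k to ℕ using by omega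
  obtain ⟨k, rfl⟩ : ∃ j, k = j + 1 := ⟨k - 1, by omega⟩
  rw [show ((k + 1 : ℕ) : ℤ) - 1 = k by push_cast; ring, natCast, natCast, natCast,
    Nat.choose_succ_succ']
  push_cast
  ring

lemma mul_eq_sub_one_mul (n : ℕ) (k : ℤ) :
    intChoose n k * k = intChoose n (k - 1) * (n - k + 1) := by
  rcases lt_or_ge k 1 with hk | hk
  · rcases lt_or_ge k 0 with hk' | hk'
    · simp [of_neg hk', of_neg (by omega : k - 1 < 0)]
    · obtain rfl : k = 0 := by omega
      simp [intChoose]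
  lift k to ℕ using by omega
  obtain ⟨k, rfl⟩ : ∃ j, k = j + 1 := ⟨k - 1, by omega⟩
  rw [show ((k + 1 : ℕ) : ℤ) - 1 = k by push_cast; ring, natCast, natCast]
  rcases le_or_gt k n with hkn | hkn
  · have h : ((n.choose (k + 1) * (k + 1) : ℕ) : ℚ) = ((n.choose k * (n - k) : ℕ) : ℚ) :=
      congrArg _ (Nat.choose_succ_right_eq n k)
    push_cast [Nat.cast_sub hkn] at h ⊢
    linear_combination h
  · rw [Nat.choose_eq_zero_of_lt hkn, Nat.choose_eq_zero_of_lt (by omega)]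
    simp

lemma sum_mul_eq_add (m n : ℕ) {R : ℕ} (hR : m < R) (z : ℤ) :
    ∑ u ∈ range R, intChoose m u * intChoose n (z - u) = intChoose (m + n) z := by
  induction m generalizing R z with
  | zero =>
    rw [sum_eq_single_of_mem 0 (mem_range.2 hR) fun u _ hu => by rw [of_lt (by omega), zero_mul]]
    rw [natCast, Nat.choose_self, Nat.cast_one, one_mul, Nat.cast_zero, sub_zero, zero_add]
  | succ m ih =>
    obtain ⟨R, rfl⟩ : ∃ S, R = S + 1 := ⟨R - 1, by omega⟩
    have shifted : ∑ u ∈ range (R + 1), intChoose m (u - 1) * intChoose n (z - u) =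
        intChoose (m + n) (z - 1) := by
      rw [sum_range_succ', Nat.cast_zero, zero_sub, of_neg (by norm_num), zero_mul, add_zero,
        ← ih (by omega : m < R) (z - 1)]
      refine sum_congr rfl fun u _ => ?_
      push_cast
      ring_nf
    simp only [add_one, add_mul, sum_add_distrib]
    rw [ih (by omega) z, shifted, add_right_comm, add_one]

end intChoose

lemma catalanConv_three_sub_one (n : ℕ) :
    catalanConv 3 (n - 1) = intChoose (2 * n) (n - 1) - intChoose (2 * n) (n - 2) := by
  cases n with
  | zero => simp [catalanConv, intChoose.of_neg]
  | succ m =>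
    have pascal := intChoose.add_one (2 * m + 2) m
    have ratio := intChoose.mul_eq_sub_one_mul (2 * m + 2) m
    rw [show ((m + 1 : ℕ) : ℤ) - 1 = m by push_cast; ring,
      show ((m + 1 : ℕ) : ℤ) - 2 = m - 1 by push_cast; ring, show 2 * (m + 1) = 2 * m + 2 by ring]
    rw [intChoose.natCast] at pascal
    simp only [catalanConv, Nat.cast_nonneg, if_true, Int.toNat_natCast, Int.cast_natCast]
    rw [pascal]
    push_cast at ratio ⊢
    field_simp
    linear_combination (-2 : ℚ) * ratio

def ballot (i t : ℕ) : ℚ := intChoose (2 * i) (i - t) - intChoose (2 * i) (i - t - 1)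

def hessenberg (t j : ℕ) : ℚ := intChoose (2 * j) (j + t - 1) - intChoose (2 * j) (j + t + 2)

lemma ballot_of_lt {i t : ℕ} (h : i < t) : ballot i t = 0 := by
  rw [ballot, intChoose.of_neg (by omega), intChoose.of_neg (by omega), sub_zero]

def convTerm (i j : ℕ) (u : ℤ) : ℚ :=
  (intChoose (2 * i) u - intChoose (2 * i) (u - 1)) *
    (intChoose (2 * j) (i + j - 1 - u) - intChoose (2 * j) (i + j + 2 - u))

lemma convTerm_reflect (i j : ℕ) (u : ℤ) : convTerm i j (2 * i + 1 - u) = convTerm i j u := by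
  have h₁ := intChoose.symm (2 * i) u
  have h₂ := intChoose.symm (2 * i) (u - 1)
  have h₃ := intChoose.symm (2 * j) (i + j - 1 - u)
  have h₄ := intChoose.symm (2 * j) (i + j + 2 - u)
  push_cast at h₁ h₂ h₃ h₄
  rw [convTerm, convTerm, ← h₁, ← h₂, ← h₃, ← h₄]
  ring_nf

lemma sum_convTerm (i j : ℕ) :
    ∑ u ∈ range (2 * i + 2), convTerm i j u =
      2 * (intChoose (2 * (i + j)) (i + j - 1) - intChoose (2 * (i + j)) (i + j - 2)) := by
  have pascal (k : ℤ) : intChoose (2 * i) k - intChoose (2 * i) (k - 1) =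
      2 * intChoose (2 * i) k - intChoose (2 * i + 1) k := by
    rw [intChoose.add_one]; ring
  simp only [convTerm, pascal, sub_mul, mul_sub, sum_sub_distrib, mul_assoc, ← Finset.mul_sum]
  simp only [intChoose.sum_mul_eq_add _ _ (by omega : 2 * i < 2 * i + 2),
    intChoose.sum_mul_eq_add _ _ (by omega : 2 * i + 1 < 2 * i + 2)]
  rw [show 2 * i + 1 + 2 * j = 2 * (i + j) + 1 by ring, show 2 * i + 2 * j = 2 * (i + j) by ring,
    intChoose.add_one, intChoose.add_one]
  have reflect (k : ℤ) : intChoose (2 * (i + j)) (i + j + k) = intChoose (2 * (i + j)) (i + j - k) := by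
    rw [← intChoose.symm]; push_cast; ring_nf
  rw [show (i + j - 1 - 1 : ℤ) = i + j - 2 by ring, show (i + j + 2 - 1 : ℤ) = i + j + 1 by ring,
    reflect 2, reflect 1]
  ring

lemma sum_ballot_mul_hessenberg {i N : ℕ} (hi : i < N) (j : ℕ) :
    ∑ t ∈ range N, ballot i t * hessenberg t j = catalanConv 3 (i + j - 1) := by
  have restrict : ∑ t ∈ range N, ballot i t * hessenberg t j =
      ∑ t ∈ range (i + 1), ballot i t * hessenberg t j :=
    (sum_subset (range_subset_range.2 hi) fun t _ ht => by
      rw [ballot_of_lt (by simpa using ht), zero_mul]).symm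
  have reflect : ∑ t ∈ range (i + 1), ballot i t * hessenberg t j =
      ∑ u ∈ range (i + 1), convTerm i j u := by
    rw [← sum_range_reflect]
    refine sum_congr rfl fun u hu => ?_
    have hu : u ≤ i := Nat.lt_succ_iff.1 (mem_range.1 hu)
    rw [ballot, hessenberg, convTerm, Nat.add_sub_cancel, Nat.cast_sub hu]
    ring_nf
  have fold : ∑ u ∈ range (2 * i + 2), convTerm i j u = 2 * ∑ u ∈ range (i + 1), convTerm i j u := by
    rw [show 2 * i + 2 = (i + 1) + (i + 1) by ring, sum_range_add, two_mul, ← sum_range_reflect]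
    congr 1
    refine sum_congr rfl fun u hu => ?_
    have hu : u ≤ i := Nat.lt_succ_iff.1 (mem_range.1 hu)
    rw [← convTerm_reflect]
    congr 1
    push_cast [Nat.cast_sub hu]
    ring
  have full := sum_convTerm i j
  rw [restrict, reflect, show (i + j - 1 : ℤ) = ((i + j : ℕ) : ℤ) - 1 by push_cast; ring,
    catalanConv_three_sub_one]
  push_cast
  linarith

lemma hessenberg_of_lt {t j : ℕ} (h : j + 1 < t) : hessenberg t j = 0 := by
  rw [hessenberg, intChoose.of_lt (by omega), intChoose.of_lt (by omega), sub_zero]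

lemma hessenberg_succ_self (j : ℕ) : hessenberg (j + 1) j = 1 := by
  rw [hessenberg, intChoose.of_lt (by push_cast; omega) (k := _ + 2), sub_zero,
    show (j + (j + 1 : ℕ) - 1 : ℤ) = (2 * j : ℕ) by push_cast; ring, intChoose.natCast,
    Nat.choose_self, Nat.cast_one]

def period3 (t : ℕ) : ℚ := if t % 3 = 0 then 1 else if t % 3 = 2 then -1 else 0

lemma period3_add_three (t : ℕ) : period3 (t + 3) = period3 t := by
  simp [period3]

lemma sum_range_sub_shift {M : Type*} [AddCommGroup M] (g : ℕ → M) (n k : ℕ) :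
    ∑ t ∈ range n, (g t - g (t + k)) = ∑ t ∈ range k, g t - ∑ t ∈ range k, g (n + t) := by
  have h₁ := sum_range_add g k n
  have h₂ := sum_range_add g n k
  rw [add_comm k n] at h₁
  simp only [sum_sub_distrib, add_comm _ k]
  rw [eq_sub_iff_add_eq, ← add_sub_right_comm, sub_eq_iff_eq_add, ← h₂, h₁]

lemma sum_period3_mul_hessenberg (j : ℕ) :
    ∑ t ∈ range (j + 2), period3 t * hessenberg t j = 0 := by
  set g : ℕ → ℚ := fun t => period3 t * intChoose (2 * j) (j + t - 1)
  have telescope : ∀ t, period3 t * hessenberg t j = g t - g (t + 3) := fun t => by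
    simp only [g, hessenberg, period3_add_three]
    push_cast
    ring_nf
  have head : ∑ t ∈ range 3, g t = 0 := by
    simp only [g, sum_range_succ, range_zero, sum_empty, period3]
    rw [← intChoose.symm (2 * j) (j + (2 : ℕ) - 1)]
    push_cast
    ring_nf
  have tail : ∑ t ∈ range 3, g (j + 2 + t) = 0 :=
    sum_eq_zero fun t _ => by simp only [g]; rw [intChoose.of_lt (by push_cast; omega), mul_zero]
  simp only [telescope, sum_range_sub_shift, head, tail, sub_zero]

lemma sum_period3_mul_hessenberg_of_lt {j N : ℕ} (h : j < N) :
    ∑ t ∈ range N, period3 t * hessenberg t j = if j + 1 = N then -period3 N else 0 := by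
  split_ifs with hN
  · subst hN
    have := sum_period3_mul_hessenberg j
    rw [sum_range_succ, hessenberg_succ_self, mul_one] at this
    linear_combination this
  · rw [← sum_period3_mul_hessenberg j]
    exact (sum_subset (range_subset_range.2 (by omega)) fun t _ ht => by
      rw [hessenberg_of_lt (by simp at ht; omega), mul_zero]).symm

lemma det_ballot (N : ℕ) : (Matrix.of fun i t : Fin N => ballot i t).det = 1 := by
  rw [Matrix.det_of_isLowerTriangular]
  · exact prod_eq_one fun i _ => by simp [ballot, intChoose]
  · exact fun i t (h : i < t) => ballot_of_lt h

lemma det_hessenberg (n : ℕ) :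
    (Matrix.of fun t j : Fin (n + 1) => hessenberg t j).det = (-1) ^ (n + 1) * period3 (n + 1) := by
  set H : Matrix (Fin (n + 1)) (Fin (n + 1)) ℚ := Matrix.of fun t j => hessenberg t j
  set H' := H.updateRow 0 (∑ t : Fin (n + 1), period3 t • H t)
  have row_zero (j : Fin (n + 1)) : H' 0 j = if j = Fin.last n then -period3 (n + 1) else 0 := by
    simp only [H', H, Matrix.updateRow_self, Finset.sum_apply, Pi.smul_apply, Matrix.of_apply,
      smul_eq_mul]
    rw [Fin.sum_univ_eq_sum_range (fun t => period3 t * hessenberg t j),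
      sum_period3_mul_hessenberg_of_lt j.isLt]
    simp [Fin.ext_iff]
  have minor : (H.submatrix Fin.succ Fin.castSucc).det = 1 := by
    rw [Matrix.det_of_isUpperTriangular]
    · exact prod_eq_one fun j _ => hessenberg_succ_self j
    · exact fun t j (h : j < t) => hessenberg_of_lt (by simp; omega)
  have det_H' : H'.det = H.det := by
    rw [Matrix.det_updateRow_sum]
    simp [period3]
  rw [← det_H', Matrix.det_succ_row_zero, Fintype.sum_eq_single (Fin.last n) fun j hj => by
    rw [row_zero, if_neg hj, mul_zero, zero_mul]]
  have minor' : H'.submatrix Fin.succ Fin.castSucc = H.submatrix Fin.succ Fin.castSucc := by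
    ext t j
    simp [H']
  rw [row_zero, if_pos rfl, Fin.succAbove_last, minor', minor, Fin.val_last]
  ring

lemma hankelDet_three_neg_one (N : ℕ) : hankelDet 3 (-1) N = (-1) ^ N * period3 N := by
  cases N with
  | zero => simp [hankelDet, period3]
  | succ n =>
    have factor : (Matrix.of fun i j : Fin (n + 1) => catalanConv 3 ((i : ℤ) + (j : ℤ) + -1)) =
        (Matrix.of fun i t : Fin (n + 1) => ballot i t) *
          Matrix.of fun t j : Fin (n + 1) => hessenberg t j := by
      ext i j
      simp only [Matrix.mul_apply, Matrix.of_apply]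
      rw [Fin.sum_univ_eq_sum_range (fun t => ballot i t * hessenberg t j),
        sum_ballot_mul_hessenberg i.isLt, ← sub_eq_add_neg]
    rw [hankelDet, factor, Matrix.det_mul, det_ballot, det_hessenberg, one_mul]

/-- STATEMENT 8: for all `n ≥ 0`, `D_{3,-1}(3n) = (-1)^n`, `D_{3,-1}(3n+2) = (-1)^(n+1)`,
and `D_{3,-1}(3n+1) = 0`. -/
theorem stmt8 (n : ℕ) :
    hankelDet 3 (-1) (3 * n) = (-1 : ℚ) ^ n ∧
    hankelDet 3 (-1) (3 * n + 2) = (-1 : ℚ) ^ (n + 1) ∧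
    hankelDet 3 (-1) (3 * n + 1) = 0 := by
  have cube : (-1 : ℚ) ^ (3 * n) = (-1) ^ n := by rw [pow_mul]; norm_num
  refine ⟨?_, ?_, ?_⟩ <;> simp [hankelDet_three_neg_one, period3, Nat.add_mod, pow_add, cube]
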